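/- Let m > 0, let O, v_O, ω : ℝ → ℝ³ be differentiable with O'(t) = v_O(t), and define the (velocity-independent) potential U₃(t,x) = m v_O(t) · (ω(t) × (x − O(t))) + (m/2) ‖ω(t) × (x − O(t))‖². Then for every t ∈ ℝ and x ∈ ℝ³, the spatial gradient satisfies ∇_x U₃(t,·)(x) = m v_O(t) × ω(t) − m ω(t) × (ω(t) × (x − O(t))); since U₃ does not depend on the velocity, this is the full Euler–Lagrange generalized force ∂U₃/∂q − d/dt(∂U₃/∂q̇) produced by U₃. -/

import Mathlib

noncomputable section
open scoped RealInnerProductSpace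

/-- Euclidean 3-space. -/
abbrev E3 : Type := EuclideanSpace ℝ (Fin 3)

/-- Constructor for vectors in `E3` from three coordinates. -/
def vec3 (a b c : ℝ) : E3 := (WithLp.equiv 2 (Fin 3 → ℝ)).symm ![a, b, c]

/-- The cross product on `E3`. -/
def cross3 (a b : E3) : E3 :=
  vec3 (a 1 * b 2 - a 2 * b 1) (a 2 * b 0 - a 0 * b 2) (a 0 * b 1 - a 1 * b 0)

/-- `pderiv3 F j x i` is the partial derivative `∂_j F_i` at `x`. -/
def pderiv3 (F : E3 → E3) (j : Fin 3) (x : E3) (i : Fin 3) : ℝ :=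
  fderiv ℝ F x (EuclideanSpace.single j 1) i

/-- The curl `∇ × F` of a vector field on `E3`:
`(∇×F)_1 = ∂_2 F_3 − ∂_3 F_2`, `(∇×F)_2 = ∂_3 F_1 − ∂_1 F_3`, `(∇×F)_3 = ∂_1 F_2 − ∂_2 F_1`
(written here with 0-based indices). -/
def curl3 (F : E3 → E3) (x : E3) : E3 :=
  vec3 (pderiv3 F 1 x 2 - pderiv3 F 2 x 1)
       (pderiv3 F 2 x 0 - pderiv3 F 0 x 2)
       (pderiv3 F 0 x 1 - pderiv3 F 1 x 0)

/-- The divergence `∇ · F = ∂_1 F_1 + ∂_2 F_2 + ∂_3 F_3` of a vector field on `E3`. -/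
def div3 (F : E3 → E3) (x : E3) : ℝ :=
  pderiv3 F 0 x 0 + pderiv3 F 1 x 1 + pderiv3 F 2 x 2

/-! With `L := ω × ·`, the potential is `m⟪v_O, L (x - O)⟫ + (m/2)‖L (x - O)‖²`, whose gradient
for any bounded linear `L` is `m L† (v_O + L (x - O))`. Cyclicity of the triple product makes
`L† = · × ω`, and anticommutativity turns `(ω × (x - O)) × ω` into `-ω × (ω × (x - O))`. -/

open Matrix

lemma EuclideanSpace.real_inner_eq_dotProduct {ι : Type*} [Fintype ι]
    (a b : EuclideanSpace ℝ ι) : ⟪a, b⟫ = WithLp.ofLp a ⬝ᵥ WithLp.ofLp b := by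
  simp [EuclideanSpace.inner_eq_star_dotProduct, dotProduct_comm]

lemma cross3_eq_crossProduct (a b : E3) :
    cross3 a b = WithLp.toLp 2 (WithLp.ofLp a ⨯₃ WithLp.ofLp b) := rfl

lemma cross3_anticomm (a b : E3) : cross3 a b = -cross3 b a := by
  rw [cross3_eq_crossProduct, cross3_eq_crossProduct, ← cross_anticomm]
  rfl

lemma inner_cross3_right (u c h : E3) : ⟪u, cross3 c h⟫ = ⟪cross3 u c, h⟫ := by
  simp only [EuclideanSpace.real_inner_eq_dotProduct, cross3_eq_crossProduct]
  rw [triple_product_permutation, triple_product_permutation]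
  exact dotProduct_comm _ _

def cross3L (c : E3) : E3 →L[ℝ] E3 :=
  LinearMap.toContinuousLinearMap
    ((WithLp.linearEquiv 2 ℝ (Fin 3 → ℝ)).symm.toLinearMap ∘ₗ crossProduct (WithLp.ofLp c) ∘ₗ
      (WithLp.linearEquiv 2 ℝ (Fin 3 → ℝ)).toLinearMap)

@[simp] lemma cross3L_apply (c y : E3) : cross3L c y = cross3 c y := rfl

lemma adjoint_cross3L_apply (c u : E3) : (cross3L c).adjoint u = cross3 u c :=
  ext_inner_right ℝ fun h => by
    rw [ContinuousLinearMap.adjoint_inner_left, cross3L_apply, inner_cross3_right]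

section

variable {E F : Type*} [NormedAddCommGroup E] [InnerProductSpace ℝ E] [CompleteSpace E]
  [NormedAddCommGroup F] [InnerProductSpace ℝ F] [CompleteSpace F]

theorem hasGradientAt_inner_add_half_norm_sq (L : E →L[ℝ] F) (a : ℝ) (u : F) (p x : E) :
    HasGradientAt (fun y => a * ⟪u, L (y - p)⟫ + (a / 2) * ‖L (y - p)‖ ^ 2)
      (a • L.adjoint (u + L (x - p))) x := by
  have hL : HasFDerivAt (fun y => L (y - p)) L x :=
    L.hasFDerivAt.comp x ((hasFDerivAt_id x).sub_const p)
  have hU := (((innerSL ℝ u).hasFDerivAt.comp x hL).const_mul a).add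
    (hL.norm_sq.const_mul (a / 2))
  rw [hasGradientAt_iff_hasFDerivAt]
  refine hU.congr_fderiv ?_
  ext h
  simp only [InnerProductSpace.toDual_apply_apply, real_inner_smul_left, inner_add_left,
    ContinuousLinearMap.adjoint_inner_left, _root_.add_apply, _root_.smul_apply,
    ContinuousLinearMap.comp_apply, coe_innerSL_apply, smul_eq_mul, nsmul_eq_mul]
  ring

end

theorem grad_U3_general (m : ℝ) (O vO ω : ℝ → E3)
    (U3 : ℝ → E3 → ℝ)
    (hU3 : ∀ t x, U3 t x = m * ⟪vO t, cross3 (ω t) (x - O t)⟫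
        + (m / 2) * ‖cross3 (ω t) (x - O t)‖ ^ 2)
    (t : ℝ) (x : E3) :
    gradient (U3 t) x
      = m • cross3 (vO t) (ω t) - m • cross3 (ω t) (cross3 (ω t) (x - O t)) := by
  have hU : U3 t = fun y => m * ⟪vO t, cross3L (ω t) (y - O t)⟫
      + (m / 2) * ‖cross3L (ω t) (y - O t)‖ ^ 2 := funext (hU3 t)
  rw [hU, (hasGradientAt_inner_add_half_norm_sq _ m _ _ x).gradient, map_add,
    adjoint_cross3L_apply, adjoint_cross3L_apply, cross3L_apply,
    cross3_anticomm (cross3 (ω t) _), smul_add, smul_neg, ← sub_eq_add_neg]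

/-- The velocity-independent potential
`U₃(t,x) = m v_O · (ω × (x − O)) + (m/2)‖ω × (x − O)‖²` has spatial gradient
`m v_O × ω − m ω × (ω × (x − O))`; as `U₃` does not depend on the velocity, this is the full
Euler–Lagrange generalized force produced by `U₃`. -/
theorem grad_U3 (m : ℝ) (hm : 0 < m) (O vO ω : ℝ → E3)
    (hO : Differentiable ℝ O) (hvO : Differentiable ℝ vO) (hω : Differentiable ℝ ω)
    (hO' : ∀ t, deriv O t = vO t)
    (U3 : ℝ → E3 → ℝ)
    (hU3 : ∀ t x, U3 t x = m * ⟪vO t, cross3 (ω t) (x - O t)⟫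
        + (m / 2) * ‖cross3 (ω t) (x - O t)‖ ^ 2)
    (t : ℝ) (x : E3) :
    gradient (U3 t) x
      = m • cross3 (vO t) (ω t) - m • cross3 (ω t) (cross3 (ω t) (x - O t)) :=
  grad_U3_general m O vO ω U3 hU3 t x
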